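/- Let n and k be integers with 2 ≤ k ≤ n−1, and let X ⊂ ℝ² be an n-independent node set with #X = d(n,k−1)+1. Then dim P_{k,X} ≤ 2, i.e., at most two linearly independent curves of degree ≤ k pass through all the nodes of X. Moreover, dim P_{k,X} = 2 if and only if there exists a polynomial μ of exact total degree k−1 that vanishes at exactly d(n,k−1) nodes of X (i.e., all the nodes of X but one lie in a maximal curve of degree k−1 for X). -/

import Mathlib

open MvPolynomial

noncomputable section

/-- A node (point) in the plane. -/
abbrev Pt : Type := Fin 2 → ℝ

/-- `p` is an `n`-fundamental polynomial of the node `A` with respect to the node set `X`. -/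
def IsFund (n : ℕ) (X : Finset Pt) (A : Pt) (p : MvPolynomial (Fin 2) ℝ) : Prop :=
  p.totalDegree ≤ n ∧ eval A p = 1 ∧ ∀ B ∈ X, B ≠ A → eval B p = 0

/-- The node set `X` is `n`-independent. -/
def NIndep (n : ℕ) (X : Finset Pt) : Prop := ∀ A ∈ X, ∃ p, IsFund n X A p

/-- `N_m = dim Π_m = (m+1)(m+2)/2`. -/
def Nn (m : ℕ) : ℕ := (m + 1) * (m + 2) / 2

/-- `d(n,k) = N_n - N_{n-k}`. -/
def dnk (n k : ℕ) : ℕ := Nn n - Nn (n - k)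

/-- The space `P_{k,X}` of polynomials of total degree at most `k` vanishing on `X`. -/
def PkX (k : ℕ) (X : Finset Pt) : Submodule ℝ (MvPolynomial (Fin 2) ℝ) :=
  restrictTotalDegree (Fin 2) ℝ k ⊓
    ⨅ A ∈ X, LinearMap.ker (aeval (R := ℝ) (S₁ := ℝ) (A : Fin 2 → ℝ)).toLinearMap

set_option linter.unusedSectionVars false
set_option linter.unusedVariables false

section Dim

lemma Nn_succ (m : ℕ) : Nn (m + 1) = Nn m + (m + 2) := by
  have h2 : 2 ∣ (m + 1) * (m + 2) := Nat.even_mul_succ_self (m+1) |>.two_dvd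
  obtain ⟨c, hc⟩ := h2
  have h3 : (m + 2) * (m + 3) = 2 * (c + (m+2)) := by
    have : (m+2)*(m+3) = (m+1)*(m+2) + 2*(m+2) := by ring
    omega
  simp only [Nn, hc, h3]
  omega

lemma Nn_zero : Nn 0 = 1 := rfl

lemma Nn_mono : StrictMono Nn := by
  apply strictMono_nat_of_lt_succ
  intro m; rw [Nn_succ]; omega

lemma Nn_le_iff {a b : ℕ} : Nn a ≤ Nn b ↔ a ≤ b := by
  constructor
  · intro h; by_contra hc; exact absurd (Nn_mono (by omega : b < a)) (by omega)
  · intro h; exact Nn_mono.monotone h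

lemma Nn_pos (m : ℕ) : 1 ≤ Nn m := by
  have := Nn_mono.monotone (Nat.zero_le m); simpa [Nn_zero] using this


lemma sum_tri (m : ℕ) : ∑ i ∈ Finset.range (m+1), (m+1-i) = Nn m := by
  induction m with
  | zero => decide
  | succ m ih =>
    rw [Finset.sum_range_succ]
    have h : ∑ i ∈ Finset.range (m+1), (m+1+1-i) = ∑ i ∈ Finset.range (m+1), ((m+1-i) + 1) := by
      refine Finset.sum_congr rfl fun i hi => ?_
      simp only [Finset.mem_range] at hi; omega
    rw [h, Finset.sum_add_distrib, ih, Finset.sum_const, Finset.card_range, Nn_succ]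
    simp; omega

def triEquiv (m : ℕ) : {p : ℕ × ℕ // p.1 + p.2 ≤ m} ≃ ((a : Fin (m+1)) × Fin (m + 1 - a.1)) where
  toFun p := ⟨⟨p.1.1, by have := p.2; omega⟩, ⟨p.1.2, show p.1.2 < m + 1 - p.1.1 by have := p.2; omega⟩⟩
  invFun x := ⟨(x.1.1, x.2.1), by have := x.1.2; have := x.2.2; omega⟩
  left_inv := by rintro ⟨⟨a,b⟩,h⟩; rfl
  right_inv := by rintro ⟨⟨a,ha⟩,⟨b,hb⟩⟩; rfl

lemma sum_eq_pair (n : Fin 2 →₀ ℕ) : (n.sum fun _ e => e) = n 0 + n 1 := by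
  rw [Finsupp.sum_fintype]
  · exact Fin.sum_univ_two n
  · intro i; rfl

def setEquiv (m : ℕ) : {n : Fin 2 →₀ ℕ | (n.sum fun _ e => e) ≤ m} ≃ {p : ℕ × ℕ // p.1 + p.2 ≤ m} := by
  refine Equiv.subtypeEquiv ((Finsupp.equivFunOnFinite).trans (piFinTwoEquiv fun _ => ℕ)) ?_
  intro n
  simp only [Set.mem_setOf_eq, Equiv.trans_apply, piFinTwoEquiv_apply]
  rw [sum_eq_pair]; rfl

lemma finrank_V (m : ℕ) : Module.finrank ℝ (restrictTotalDegree (Fin 2) ℝ m) = Nn m := by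
  have b : Module.Basis {n : Fin 2 →₀ ℕ | (n.sum fun _ e => e) ≤ m} ℝ
      (restrictTotalDegree (Fin 2) ℝ m) := basisRestrictSupport ℝ _
  rw [Module.finrank_eq_nat_card_basis b]
  rw [Nat.card_congr ((setEquiv m).trans (triEquiv m)), Nat.card_eq_fintype_card,
    Fintype.card_sigma]
  simp only [Fintype.card_fin]
  rw [Fin.sum_univ_eq_sum_range (fun a => m + 1 - a) (m+1)]
  exact sum_tri m


section DegLemmas

variable {σ : Type*} {R : Type*} [CommRing R] [IsDomain R]

lemma degree_eq_sum (d : σ →₀ ℕ) : (d.sum fun _ e => e) = d.degree := rfl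

omit [IsDomain R] in
lemma homComp_td_ne_zero {p : MvPolynomial σ R} (hp : p ≠ 0) :
    homogeneousComponent p.totalDegree p ≠ 0 := by
  classical
  have hsupp : p.support.Nonempty := support_nonempty.mpr hp
  obtain ⟨d, hd, hdeg⟩ := Finset.exists_mem_eq_sup p.support hsupp (fun s => s.sum fun _ e => e)
  intro h0
  have : coeff d (homogeneousComponent p.totalDegree p) = coeff d p := by
    rw [coeff_homogeneousComponent, if_pos]
    rw [← degree_eq_sum, totalDegree, hdeg]
  rw [h0] at this
  exact (mem_support_iff.mp hd) (by simpa using this.symm)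

lemma degree_add' (x y : σ →₀ ℕ) : (x + y).degree = x.degree + y.degree := by
  simp [Finsupp.degree_eq_weight_one, map_add]

lemma totalDegree_mul_eq {p q : MvPolynomial σ R} (hp : p ≠ 0) (hq : q ≠ 0) :
    (p * q).totalDegree = p.totalDegree + q.totalDegree := by
  classical
  refine le_antisymm (totalDegree_mul p q) ?_
  set a := p.totalDegree
  set b := q.totalDegree
  set P := homogeneousComponent a p with hP
  set Q := homogeneousComponent b q with hQ
  have hPh : P.IsHomogeneous a := homogeneousComponent_isHomogeneous a p
  have hQh : Q.IsHomogeneous b := homogeneousComponent_isHomogeneous b q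
  have hPQ : P * Q ≠ 0 := mul_ne_zero (homComp_td_ne_zero hp) (homComp_td_ne_zero hq)
  obtain ⟨e, he⟩ : ∃ e, coeff e (P * Q) ≠ 0 := by
    by_contra h; push_neg at h; exact hPQ (by ext e; simpa using h e)
  have hedeg : e.degree = a + b := by
    by_contra hne
    exact he ((hPh.mul hQh).coeff_eq_zero hne)
  have key : coeff e (p * q) = coeff e (P * Q) := by
    rw [coeff_mul, coeff_mul]
    refine Finset.sum_congr rfl fun x hx => ?_
    rw [Finset.HasAntidiagonal.mem_antidiagonal] at hx
    have hdadd : x.1.degree + x.2.degree = a + b := by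
      rw [← degree_add', hx, hedeg]
    by_cases h1 : x.1.degree = a
    · have h2 : x.2.degree = b := by omega
      rw [hP, hQ, coeff_homogeneousComponent, coeff_homogeneousComponent, if_pos h1, if_pos h2]
    · rw [hP, hQ, coeff_homogeneousComponent, coeff_homogeneousComponent, if_neg h1]
      rcases Nat.lt_or_ge x.1.degree a with hlt | hgt
      · have h2 : x.2.degree ≠ b := by omega
        rw [if_neg h2]
        have : coeff x.2 q = 0 := by
          by_contra hc
          have := le_totalDegree (mem_support_iff.mpr hc)
          rw [degree_eq_sum] at this; omega
        rw [this]; ring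
      · have : coeff x.1 p = 0 := by
          by_contra hc
          have := le_totalDegree (mem_support_iff.mpr hc)
          rw [degree_eq_sum] at this
          rcases Nat.lt_or_ge a x.1.degree with h | h
          · omega
          · exact h1 (le_antisymm h hgt)
        rw [this]; ring
  have : e ∈ (p * q).support := mem_support_iff.mpr (by rw [key]; exact he)
  have := le_totalDegree this
  rw [degree_eq_sum, hedeg] at this
  exact this

lemma eq_C_of_totalDegree_eq_zero {p : MvPolynomial σ R} (h : p.totalDegree = 0) :
    p = C (coeff 0 p) := by
  classical
  ext m
  rw [coeff_C]
  by_cases hm : (0 : σ →₀ ℕ) = m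
  · rw [if_pos hm, ← hm]
  · rw [if_neg hm]
    by_contra hc
    have hmem : m ∈ p.support := mem_support_iff.mpr hc
    have := (totalDegree_eq_zero_iff σ p).mp h m hmem
    exact hm (by ext i; simp [this i])


end DegLemmas

abbrev R2 := MvPolynomial (Fin 2) ℝ
abbrev Vd (m : ℕ) : Submodule ℝ R2 := restrictTotalDegree (Fin 2) ℝ m

lemma aeval_eq_eval' (A : Pt) (p : R2) : aeval (R := ℝ) (S₁ := ℝ) A p = eval A p := by
  rw [aeval_def, Algebra.algebraMap_self]; rfl

lemma mem_PkX {k : ℕ} {X : Finset Pt} {p : R2} :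
    p ∈ PkX k X ↔ p.totalDegree ≤ k ∧ ∀ A ∈ X, eval A p = 0 := by
  rw [PkX, Submodule.mem_inf, mem_restrictTotalDegree]
  apply and_congr Iff.rfl
  rw [Submodule.mem_iInf]
  apply forall_congr'
  intro A
  rw [Submodule.mem_iInf]
  apply forall_congr'
  intro _
  rw [LinearMap.mem_ker, AlgHom.toLinearMap_apply, aeval_eq_eval']

lemma PkX_mono {k n : ℕ} (h : k ≤ n) (X : Finset Pt) : PkX k X ≤ PkX n X := by
  intro p hp; rw [mem_PkX] at *; exact ⟨hp.1.trans h, hp.2⟩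

instance PkX_fd (k : ℕ) (X : Finset Pt) : FiniteDimensional ℝ (PkX k X) :=
  Submodule.finiteDimensional_of_le (inf_le_left)

lemma NIndep.subset {n : ℕ} {X Y : Finset Pt} (hYX : Y ⊆ X) (h : NIndep n X) : NIndep n Y := by
  intro A hA
  obtain ⟨p, hp1, hp2, hp3⟩ := h A (hYX hA)
  exact ⟨p, hp1, hp2, fun B hB hBA => hp3 B (hYX hB) hBA⟩

/-- Evaluation map on `Π_n`. -/
def Emap (n : ℕ) (X : Finset Pt) : Vd n →ₗ[ℝ] (↥X → ℝ) :=
  LinearMap.pi fun A =>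
    ((aeval (R := ℝ) (S₁ := ℝ) ((A : Pt))).toLinearMap).comp (Vd n).subtype

lemma Emap_apply (n : ℕ) (X : Finset Pt) (p : Vd n) (A : ↥X) :
    Emap n X p A = eval (A : Pt) (p : R2) := by
  simp [Emap, aeval_eq_eval']

lemma Emap_surj {n : ℕ} {X : Finset Pt} (hind : NIndep n X) :
    Function.Surjective (Emap n X) := by
  rw [← LinearMap.range_eq_top]
  rw [eq_top_iff]
  intro f _
  classical
  have hf : f = ∑ A : ↥X, f A • fun B : ↥X => if (A : Pt) = (B : Pt) then (1:ℝ) else 0 := by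
    ext B
    rw [Finset.sum_apply]
    rw [Finset.sum_eq_single B]
    · simp
    · intro A _ hAB
      have : (A : Pt) ≠ (B : Pt) := fun h => hAB (Subtype.ext h)
      simp [this, hAB]
    · intro h; exact absurd (Finset.mem_univ B) h
  rw [hf]
  apply Submodule.sum_mem
  intro A _
  apply Submodule.smul_mem
  obtain ⟨p, hdeg, hone, hvan⟩ := hind A A.2
  refine ⟨⟨p, (mem_restrictTotalDegree _ _ _).mpr hdeg⟩, ?_⟩
  ext B
  rw [Emap_apply]
  by_cases hAB : (A : Pt) = (B : Pt)
  · rw [if_pos hAB, ← hAB, hone]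
  · rw [if_neg hAB]
    exact hvan (B : Pt) B.2 (fun h => hAB h.symm)

lemma ker_Emap_map (n : ℕ) (X : Finset Pt) :
    (LinearMap.ker (Emap n X)).map (Vd n).subtype = PkX n X := by
  ext p
  simp only [Submodule.mem_map, LinearMap.mem_ker, mem_PkX]
  constructor
  · rintro ⟨⟨q, hq⟩, hker, rfl⟩
    refine ⟨(mem_restrictTotalDegree _ _ _).mp hq, fun A hA => ?_⟩
    have := congrFun hker ⟨A, hA⟩
    rwa [Emap_apply] at this
  · rintro ⟨hdeg, hvan⟩
    refine ⟨⟨p, (mem_restrictTotalDegree _ _ _).mpr hdeg⟩, ?_, rfl⟩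
    ext A
    rw [Emap_apply]
    exact hvan A A.2

lemma finrank_PkX_add {n : ℕ} {X : Finset Pt} (hind : NIndep n X) :
    Module.finrank ℝ (PkX n X) + X.card = Nn n := by
  have h1 := LinearMap.finrank_range_add_finrank_ker (Emap n X)
  have h2 : LinearMap.range (Emap n X) = ⊤ := LinearMap.range_eq_top.mpr (Emap_surj hind)
  rw [h2] at h1
  have h3 : Module.finrank ℝ (⊤ : Submodule ℝ (↥X → ℝ)) = X.card := by
    rw [finrank_top, Module.finrank_pi, Fintype.card_coe]
  have h4 : Module.finrank ℝ (LinearMap.ker (Emap n X)) = Module.finrank ℝ (PkX n X) := by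
    rw [← ker_Emap_map n X]
    exact (Submodule.equivSubtypeMap _ _).finrank_eq
  rw [h3, h4, finrank_V] at h1
  omega

/-- L1 : an `n`-independent node set contained in a curve of degree `≤ j ≤ n` has at most
`d(n,j)` elements. -/
lemma card_le_of_curve {n j : ℕ} (hj : j ≤ n) {Y : Finset Pt} (hind : NIndep n Y)
    {q : R2} (hq : q ≠ 0) (hdeg : q.totalDegree ≤ j) (hvan : ∀ A ∈ Y, eval A q = 0) :
    Y.card + Nn (n - j) ≤ Nn n := by
  set Ψ : Vd (n - j) →ₗ[ℝ] R2 := (LinearMap.mulLeft ℝ q).comp (Vd (n - j)).subtype with hΨ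
  have hinj : Function.Injective Ψ := by
    intro a b hab
    simp only [hΨ, LinearMap.comp_apply, LinearMap.mulLeft_apply] at hab
    exact Subtype.ext (mul_left_cancel₀ hq hab)
  have hrange : LinearMap.range Ψ ≤ PkX n Y := by
    rintro _ ⟨c, rfl⟩
    rw [mem_PkX]
    constructor
    · show (Ψ c : R2).totalDegree ≤ n
      have hc := (mem_restrictTotalDegree _ _ _).mp c.2
      have : (Ψ c : R2) = q * (c : R2) := rfl
      rw [this]
      have := totalDegree_mul q (c : R2)
      omega
    · intro A hA
      simp only [hΨ, LinearMap.comp_apply, LinearMap.mulLeft_apply, map_mul, hvan A hA, zero_mul]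
  have h1 : Module.finrank ℝ (LinearMap.range Ψ) = Nn (n - j) := by
    rw [LinearMap.finrank_range_of_inj hinj, finrank_V]
  have h2 : Module.finrank ℝ (LinearMap.range Ψ) ≤ Module.finrank ℝ (PkX n Y) :=
    Submodule.finrank_mono hrange
  have h3 := finrank_PkX_add hind
  omega


section Main
variable {n k : ℕ} {X : Finset Pt}

lemma card_eq (hk2 : 2 ≤ k) (hkn : k + 1 ≤ n) (hcard : X.card = dnk n (k - 1) + 1) :
    X.card + Nn (n - k + 1) = Nn n + 1 := by
  have h1 : n - (k - 1) = n - k + 1 := by omega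
  have h2 : Nn (n - k + 1) ≤ Nn n := Nn_le_iff.mpr (by omega)
  rw [hcard, dnk, h1]
  omega

lemma deg_exact (hk2 : 2 ≤ k) (hkn : k + 1 ≤ n) (hind : NIndep n X)
    (hcard : X.card = dnk n (k - 1) + 1) {r : R2} (hr : r ∈ PkX k X) (hr0 : r ≠ 0) :
    r.totalDegree = k := by
  rw [mem_PkX] at hr
  by_contra hne
  have hle : r.totalDegree ≤ k - 1 := by omega
  have := card_le_of_curve (by omega : k - 1 ≤ n) hind hr0 hle hr.2
  have h1 : n - (k - 1) = n - k + 1 := by omega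
  rw [h1] at this
  have := card_eq hk2 hkn hcard
  omega

/-- there is a node of `X` off any curve of degree `< k`; quantitative form. -/
lemma off_curve (hk2 : 2 ≤ k) (hkn : k + 1 ≤ n) (hind : NIndep n X)
    (hcard : X.card = dnk n (k - 1) + 1) {μ : R2} (hμ0 : μ ≠ 0)
    (hμdeg : μ.totalDegree ≤ k - 1) :
    (X.filter (fun A => eval A μ = 0)).card + 1 ≤ X.card := by
  classical
  have hsub : X.filter (fun A => eval A μ = 0) ⊆ X := Finset.filter_subset _ _
  have hvan : ∀ A ∈ X.filter (fun A => eval A μ = 0), eval A μ = 0 := by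
    intro A hA; exact (Finset.mem_filter.mp hA).2
  have := card_le_of_curve (by omega : k - 1 ≤ n) (NIndep.subset hsub hind) hμ0 hμdeg hvan
  have h1 : n - (k - 1) = n - k + 1 := by omega
  rw [h1] at this
  have h2 := card_eq hk2 hkn hcard
  have h3 : Nn (n - k + 1) ≤ Nn n := Nn_le_iff.mpr (by omega)
  have h4 : Nn (n - k) + (n - k + 2) = Nn (n - k + 1) := (Nn_succ (n - k)).symm
  have h5 : 1 ≤ Nn (n - k) := Nn_pos _
  omega

set_option maxHeartbeats 1000000 in
set_option synthInstance.maxHeartbeats 400000 in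
theorem lemmaM (hk2 : 2 ≤ k) (hkn : k + 1 ≤ n) (hind : NIndep n X)
    (hcard : X.card = dnk n (k - 1) + 1) {p q : R2} (hp : p ∈ PkX k X) (hq : q ∈ PkX k X)
    (hpq : ∀ a b : ℝ, a • p + b • q = 0 → a = 0 ∧ b = 0) :
    ∃ μ p₀ q₀ : R2, p = μ * p₀ ∧ q = μ * q₀ ∧ μ.totalDegree = k - 1 ∧
      p₀.totalDegree = 1 ∧ q₀.totalDegree = 1 ∧ ∀ r ∈ PkX k X, μ ∣ r := by
  classical
  have hp0 : p ≠ 0 := by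
    rintro rfl
    have := (hpq 1 0 (by simp)).1
    norm_num at this
  have hq0 : q ≠ 0 := by
    rintro rfl
    have := (hpq 0 1 (by simp)).2
    norm_num at this
  have hdp : p.totalDegree = k := deg_exact hk2 hkn hind hcard hp hp0
  have hdq : q.totalDegree = k := deg_exact hk2 hkn hind hcard hq hq0
  -- maximal degree common divisor
  set P : ℕ → Prop := fun e => ∃ d : R2, d ∣ p ∧ d ∣ q ∧ d.totalDegree = e with hPdef
  have hP0 : P 0 := ⟨1, one_dvd _, one_dvd _, totalDegree_one⟩
  set e := Nat.findGreatest P k with he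
  have hPe : P e := Nat.findGreatest_spec (Nat.zero_le k) hP0
  obtain ⟨g, hgp, hgq, hge⟩ := hPe
  have hdvd_deg : ∀ d : R2, d ∣ p → d.totalDegree ≤ k := by
    intro d hd
    obtain ⟨c, rfl⟩ := hd
    have hd0 : d ≠ 0 := fun h => hp0 (by rw [h, zero_mul])
    have hc0 : c ≠ 0 := fun h => hp0 (by rw [h, mul_zero])
    have := totalDegree_mul_eq hd0 hc0
    omega
  have hmax : ∀ d : R2, d ∣ p → d ∣ q → d.totalDegree ≤ e := by
    intro d hdp' hdq'
    by_contra hlt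
    have hgt : Nat.findGreatest P k < d.totalDegree := by omega
    exact Nat.findGreatest_is_greatest hgt (hdvd_deg d hdp') ⟨d, hdp', hdq', rfl⟩
  obtain ⟨p₀, hpfac⟩ := hgp
  obtain ⟨q₀, hqfac⟩ := hgq
  have hg0 : g ≠ 0 := fun h => hp0 (by rw [hpfac, h, zero_mul])
  have hp₀0 : p₀ ≠ 0 := fun h => hp0 (by rw [hpfac, h, mul_zero])
  have hq₀0 : q₀ ≠ 0 := fun h => hq0 (by rw [hqfac, h, mul_zero])
  have hek : e ≤ k := by rw [← hge]; exact hdvd_deg g ⟨p₀, hpfac⟩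
  have hdp₀ : p₀.totalDegree = k - e := by
    have := totalDegree_mul_eq hg0 hp₀0
    rw [← hpfac, hdp, hge] at this; omega
  have hdq₀ : q₀.totalDegree = k - e := by
    have := totalDegree_mul_eq hg0 hq₀0
    rw [← hqfac, hdq, hge] at this; omega
  have hrel : IsRelPrime p₀ q₀ := by
    intro d hd1 hd2
    have hd0 : d ≠ 0 := by
      rintro rfl
      obtain ⟨c, hc⟩ := hd1
      exact hp₀0 (by rw [hc, zero_mul])
    have hgd_p : g * d ∣ p := by
      obtain ⟨c, hc⟩ := hd1
      exact ⟨c, by rw [hpfac, hc, mul_assoc]⟩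
    have hgd_q : g * d ∣ q := by
      obtain ⟨c, hc⟩ := hd2
      exact ⟨c, by rw [hqfac, hc, mul_assoc]⟩
    have := hmax _ hgd_p hgd_q
    have hdd := totalDegree_mul_eq hg0 hd0
    have hdeg0 : d.totalDegree = 0 := by omega
    have hdC : d = C (coeff 0 d) := eq_C_of_totalDegree_eq_zero hdeg0
    have hcoeff0 : coeff 0 d ≠ 0 := fun h => hd0 (by rw [hdC, h, map_zero])
    rw [hdC]
    exact (isUnit_iff_ne_zero.mpr hcoeff0).map (C : ℝ →+* R2)
  -- t := k - e ≥ 1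
  have ht1 : 1 ≤ k - e := by
    by_contra h
    have h0 : k - e = 0 := by omega
    have hpC := eq_C_of_totalDegree_eq_zero (by rw [hdp₀, h0])
    have hqC := eq_C_of_totalDegree_eq_zero (by rw [hdq₀, h0])
    set a := coeff 0 p₀
    set b := coeff 0 q₀
    have ha0 : a ≠ 0 := fun h => hp₀0 (by rw [hpC, h, map_zero])
    have hzero : b • p + (-a) • q = 0 := by
      rw [hpfac, hqfac, hpC, hqC, smul_eq_C_mul, smul_eq_C_mul, map_neg]
      ring
    exact ha0 (by simpa using (hpq b (-a) hzero).2)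
  -- the multiplication map Φ
  set s := n - k with hs
  have hs1 : 1 ≤ s := by omega
  set Φ : (Vd s × Vd s) →ₗ[ℝ] R2 :=
    ((LinearMap.mulLeft ℝ p).comp (Vd s).subtype).coprod
      ((LinearMap.mulLeft ℝ q).comp (Vd s).subtype) with hΦ
  have hΦ_apply : ∀ z : Vd s × Vd s, Φ z = p * (z.1 : R2) + q * (z.2 : R2) := by
    intro z; rfl
  have hrangeΦ : LinearMap.range Φ ≤ PkX n X := by
    rintro _ ⟨z, rfl⟩
    rw [hΦ_apply, mem_PkX]
    constructor
    · have h1 := totalDegree_mul p (z.1 : R2)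
      have h2 := totalDegree_mul q (z.2 : R2)
      have h3 := (mem_restrictTotalDegree _ _ _).mp z.1.2
      have h4 := (mem_restrictTotalDegree _ _ _).mp z.2.2
      have := totalDegree_add (p * (z.1 : R2)) (q * (z.2 : R2))
      have hms : max (p * (z.1:R2)).totalDegree (q * (z.2:R2)).totalDegree ≤ n := by
        apply max_le <;> omega
      omega
    · intro A hA
      rw [mem_PkX] at hp hq
      rw [map_add, map_mul, map_mul, hp.2 A hA, hq.2 A hA, zero_mul, zero_mul, add_zero]
  have hrn : Module.finrank ℝ (LinearMap.range Φ) + Module.finrank ℝ (LinearMap.ker Φ)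
      = 2 * Nn s := by
    have h := LinearMap.finrank_range_add_finrank_ker Φ
    rw [Module.finrank_prod, finrank_V] at h
    omega
  have hP_rank : Module.finrank ℝ (PkX n X) + 1 = Nn (s + 1) := by
    have h1 := finrank_PkX_add hind
    have h2 := card_eq hk2 hkn hcard
    have h3 : n - k + 1 = s + 1 := rfl
    rw [h3] at h2
    omega
  have hrange_le : Module.finrank ℝ (LinearMap.range Φ) ≤ Module.finrank ℝ (PkX n X) :=
    Submodule.finrank_mono hrangeΦ
  have hNns : Nn s = Nn (s - 1) + (s + 1) := by
    have h := Nn_succ (s - 1)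
    have h' : s - 1 + 1 = s := by omega
    rw [h'] at h
    omega
  have hNns1 : Nn (s + 1) = Nn s + (s + 2) := Nn_succ s
  have hkerlow : Nn (s - 1) ≤ Module.finrank ℝ (LinearMap.ker Φ) := by omega
  -- injection of the kernel
  set ι : LinearMap.ker Φ →ₗ[ℝ] R2 :=
    (Vd s).subtype.comp ((LinearMap.fst ℝ (Vd s) (Vd s)).comp (LinearMap.ker Φ).subtype)
    with hι
  have hι_apply : ∀ z : LinearMap.ker Φ, ι z = ((z : Vd s × Vd s).1 : R2) := fun z => rfl
  have hkerz : ∀ z : LinearMap.ker Φ,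
      p * (((z : Vd s × Vd s).1 : R2)) + q * (((z : Vd s × Vd s).2 : R2)) = 0 := by
    intro z
    have := z.2
    rw [LinearMap.mem_ker] at this
    rw [← hΦ_apply]
    exact this
  have hιinj : Function.Injective ι := by
    intro z w hzw
    have h1 : ((z : Vd s × Vd s).1 : R2) = ((w : Vd s × Vd s).1 : R2) := hzw
    -- suffices second components equal
    have h2 : ((z : Vd s × Vd s).2 : R2) = ((w : Vd s × Vd s).2 : R2) := by
      have hz := hkerz z
      have hw := hkerz w
      rw [h1] at hz
      have heq : q * ((z : Vd s × Vd s).2 : R2) = q * ((w : Vd s × Vd s).2 : R2) :=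
        add_left_cancel (hz.trans hw.symm)
      exact mul_left_cancel₀ hq0 heq
    have hfst : (z : Vd s × Vd s).1 = (w : Vd s × Vd s).1 := Subtype.ext h1
    have hsnd : (z : Vd s × Vd s).2 = (w : Vd s × Vd s).2 := Subtype.ext h2
    apply Subtype.ext
    exact Prod.ext hfst hsnd
  -- divisibility of first components of kernel elements
  have hkdvd : ∀ z : LinearMap.ker Φ, q₀ ∣ ((z : Vd s × Vd s).1 : R2) := by
    intro z
    have hz := hkerz z
    have h1 : p * ((z : Vd s × Vd s).1 : R2) = -(q * ((z : Vd s × Vd s).2 : R2)) :=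
      eq_neg_of_add_eq_zero_left hz
    have h2 : p₀ * ((z : Vd s × Vd s).1 : R2) = q₀ * (-((z : Vd s × Vd s).2 : R2)) := by
      apply mul_left_cancel₀ hg0
      rw [← mul_assoc, ← hpfac, h1, hqfac]
      ring
    have h3 : q₀ ∣ p₀ * ((z : Vd s × Vd s).1 : R2) := ⟨_, h2⟩
    exact hrel.symm.dvd_of_dvd_mul_left h3
  set t := k - e with htdef
  -- t ≤ s
  have hts : t ≤ s := by
    by_contra hts
    have hzero : ι = 0 := by
      apply LinearMap.ext
      intro z
      show ι z = 0
      rw [hι_apply]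
      obtain ⟨c, hc⟩ := hkdvd z
      by_cases hz1 : ((z : Vd s × Vd s).1 : R2) = 0
      · exact hz1
      · exfalso
        have hc0 : c ≠ 0 := fun h => hz1 (by rw [hc, h, mul_zero])
        have hdegz1 : ((z : Vd s × Vd s).1 : R2).totalDegree ≤ s :=
          (mem_restrictTotalDegree _ _ _).mp (z : Vd s × Vd s).1.2
        have := totalDegree_mul_eq hq₀0 hc0
        rw [← hc] at this
        omega
    have h0 : Module.finrank ℝ (LinearMap.range ι) = 0 := by
      rw [hzero, LinearMap.range_zero, finrank_bot]
    rw [LinearMap.finrank_range_of_inj hιinj] at h0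
    have := Nn_pos (s - 1)
    omega
  -- upper bound on the kernel dimension
  set Ψ : Vd (s - t) →ₗ[ℝ] R2 := (LinearMap.mulLeft ℝ q₀).comp (Vd (s - t)).subtype with hΨ
  have hι_range : LinearMap.range ι ≤ LinearMap.range Ψ := by
    rintro _ ⟨z, rfl⟩
    obtain ⟨c, hc⟩ := hkdvd z
    have hcmem : c ∈ Vd (s - t) := by
      rw [mem_restrictTotalDegree]
      by_cases hc0 : c = 0
      · rw [hc0, totalDegree_zero]; omega
      · have hz1 : ((z : Vd s × Vd s).1 : R2) ≠ 0 := fun h => by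
          rw [h] at hc
          exact hc0 ((mul_eq_zero.mp hc.symm).resolve_left hq₀0)
        have hdegz1 : ((z : Vd s × Vd s).1 : R2).totalDegree ≤ s :=
          (mem_restrictTotalDegree _ _ _).mp (z : Vd s × Vd s).1.2
        have := totalDegree_mul_eq hq₀0 hc0
        rw [← hc] at this
        omega
    exact ⟨⟨c, hcmem⟩, by rw [hι_apply, hc]; rfl⟩
  have hker_up : Module.finrank ℝ (LinearMap.ker Φ) ≤ Nn (s - t) := by
    rw [← LinearMap.finrank_range_of_inj hιinj]
    refine (Submodule.finrank_mono hι_range).trans ?_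
    have := LinearMap.finrank_range_le Ψ
    rwa [finrank_V] at this
  have ht_eq : t = 1 := by
    have hle := Nn_le_iff.mp (hkerlow.trans hker_up)
    omega
  rw [ht_eq] at hker_up
  have hrank_ge : Module.finrank ℝ (PkX n X) ≤ Module.finrank ℝ (LinearMap.range Φ) := by
    omega
  have hspace : LinearMap.range Φ = PkX n X :=
    Submodule.eq_of_le_of_finrank_le hrangeΦ hrank_ge
  refine ⟨g, p₀, q₀, hpfac, hqfac, by omega, by omega, by omega, ?_⟩
  intro r hr
  have hrmem : r ∈ LinearMap.range Φ := by
    rw [hspace]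
    exact PkX_mono (by omega : k ≤ n) X hr
  obtain ⟨z, hz⟩ := hrmem
  rw [hΦ_apply] at hz
  refine ⟨p₀ * (z.1 : R2) + q₀ * (z.2 : R2), ?_⟩
  rw [← hz, hpfac, hqfac]
  ring

end Main

-- helper: linearly independent family inside a submodule bounds its finrank from below
lemma indep_le_finrank {m : ℕ} {M : Type*} [AddCommGroup M] [Module ℝ M]
    (U : Submodule ℝ M) [FiniteDimensional ℝ U] {v : Fin m → M}
    (hv : ∀ i, v i ∈ U) (hind : LinearIndependent ℝ v) : m ≤ Module.finrank ℝ U := by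
  have h2 : LinearIndependent ℝ (fun i => (⟨v i, hv i⟩ : U)) := by
    apply LinearIndependent.of_comp U.subtype
    exact hind
  simpa using h2.fintype_card_le_finrank

-- evaluation at a point restricted to degree ≤ 1 polynomials
def ev1 (B : Pt) : Vd 1 →ₗ[ℝ] ℝ :=
  ((aeval (R := ℝ) (S₁ := ℝ) B).toLinearMap).comp (Vd 1).subtype

lemma aeval_eq_eval'' (A : Pt) (p : R2) : aeval (R := ℝ) (S₁ := ℝ) A p = eval A p := by
  rw [aeval_def, Algebra.algebraMap_self]; rfl

lemma ev1_apply (B : Pt) (p : Vd 1) : ev1 B p = eval B (p : R2) := by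
  simp [ev1, aeval_eq_eval'']

lemma one_mem_Vd1 : (1 : R2) ∈ Vd 1 := by
  rw [mem_restrictTotalDegree, totalDegree_one]; omega

/-- linear polys vanishing at one point form a space of dim ≤ 2 -/
lemma finrank_ker_ev1 (B : Pt) : Module.finrank ℝ (LinearMap.ker (ev1 B)) ≤ 2 := by
  have h1 := LinearMap.finrank_range_add_finrank_ker (ev1 B)
  rw [finrank_V] at h1
  have h2 : Nn 1 = 3 := rfl
  have h3 : LinearMap.range (ev1 B) ≠ ⊥ := by
    intro hbot
    have hmem : ev1 B ⟨1, one_mem_Vd1⟩ ∈ LinearMap.range (ev1 B) :=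
      LinearMap.mem_range_self _ _
    rw [hbot, Submodule.mem_bot, ev1_apply] at hmem
    simp at hmem
  have h4 : 1 ≤ Module.finrank ℝ (LinearMap.range (ev1 B)) := by
    by_contra h
    have h0 : Module.finrank ℝ (LinearMap.range (ev1 B)) = 0 := by omega
    exact h3 (Submodule.finrank_eq_zero.mp h0)
  omega

/-- linear polys vanishing at two distinct points form a space of dim ≤ 1 -/
lemma finrank_ker_ev2 {B B' : Pt} (hBB' : B ≠ B') :
    Module.finrank ℝ (LinearMap.ker ((ev1 B).prod (ev1 B'))) ≤ 1 := by
  set f := (ev1 B).prod (ev1 B') with hf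
  have h1 := LinearMap.finrank_range_add_finrank_ker f
  rw [finrank_V] at h1
  have h2 : Nn 1 = 3 := rfl
  obtain ⟨i, hi⟩ : ∃ i, B i ≠ B' i := by
    by_contra h; push_neg at h; exact hBB' (funext h)
  have hXmem : (X i : R2) ∈ Vd 1 := by
    rw [mem_restrictTotalDegree, totalDegree_X]
  have hrange : 2 ≤ Module.finrank ℝ (LinearMap.range f) := by
    apply indep_le_finrank (v := ![(1, 1), (B i, B' i)])
    · intro j
      fin_cases j
      · exact ⟨⟨1, one_mem_Vd1⟩, by simp [hf, ev1_apply]⟩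
      · exact ⟨⟨X i, hXmem⟩, by simp [hf, ev1_apply]⟩
    · rw [LinearIndependent.pair_iff]
      intro s t hst
      have e1 : s * 1 + t * B i = 0 := congrArg Prod.fst hst
      have e2 : s * 1 + t * B' i = 0 := congrArg Prod.snd hst
      have ht : t = 0 := by
        by_contra ht
        apply hi
        have h3 : t * B i = t * B' i := by linarith [e1, e2]
        exact mul_left_cancel₀ ht h3
      refine ⟨?_, ht⟩
      rw [ht] at e1
      simpa using e1
  have hrle : Module.finrank ℝ (LinearMap.range f) ≤ 2 := by
    have := Submodule.finrank_le (LinearMap.range f)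
    simpa [Module.finrank_prod] using this
  omega


set_option synthInstance.maxHeartbeats 1000000 in
set_option maxHeartbeats 1000000 in
lemma exists_tuple {m : ℕ} (hm : m ≤ Module.finrank ℝ (PkX k XX)) :
    ∃ v : Fin m → R2, (∀ i, v i ∈ PkX k XX) ∧ LinearIndependent ℝ v := by
  have b := Module.finBasis ℝ (PkX k XX)
  refine ⟨fun i => (b (Fin.castLE hm i) : R2), fun i => (b (Fin.castLE hm i)).2, ?_⟩
  have h1 : LinearIndependent ℝ (fun i : Fin m => b (Fin.castLE hm i)) :=
    b.linearIndependent.comp _ (Fin.castLE_injective hm)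
  exact h1.map' (PkX k XX).subtype (Submodule.ker_subtype _)

theorem part1 (hk2 : 2 ≤ k) (hkn : k + 1 ≤ n) (hind : NIndep n XX)
    (hcard : XX.card = dnk n (k - 1) + 1) : Module.finrank ℝ (PkX k XX) ≤ 2 := by
  classical
  by_contra hgt
  obtain ⟨v, hvmem, hvind⟩ := exists_tuple (show 3 ≤ Module.finrank ℝ (PkX k XX) by omega)
  have hpq : ∀ a b : ℝ, a • v 0 + b • v 1 = 0 → a = 0 ∧ b = 0 := by
    intro a b hab
    have h := Fintype.linearIndependent_iff.mp hvind ![a, b, 0] ?_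
    · exact ⟨h 0, h 1⟩
    · rw [Fin.sum_univ_three]
      simpa using hab
  obtain ⟨μ, p₀, q₀, hpf, hqf, hμdeg, hdp₀, hdq₀, hdvd⟩ :=
    lemmaM hk2 hkn hind hcard (hvmem 0) (hvmem 1) hpq
  have hp0 : v 0 ≠ 0 := hvind.ne_zero 0
  have hr0 : v 2 ≠ 0 := hvind.ne_zero 2
  have hμ0 : μ ≠ 0 := fun h => hp0 (by rw [hpf, h, zero_mul])
  obtain ⟨r₀, hrf⟩ := hdvd (v 2) (hvmem 2)
  have hr₀0 : r₀ ≠ 0 := fun h => hr0 (by rw [hrf, h, mul_zero])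
  have hdr : (v 2).totalDegree = k := deg_exact hk2 hkn hind hcard (hvmem 2) hr0
  have hdr₀ : r₀.totalDegree = 1 := by
    have h := totalDegree_mul_eq hμ0 hr₀0
    rw [← hrf, hdr, hμdeg] at h
    omega
  have hoff := off_curve hk2 hkn hind hcard hμ0 (le_of_eq hμdeg)
  obtain ⟨B, hBX, hBμ⟩ : ∃ B ∈ XX, eval B μ ≠ 0 := by
    by_contra h
    push_neg at h
    rw [Finset.filter_true_of_mem h] at hoff
    omega
  have hvanish : ∀ (f f₀ : R2), f = μ * f₀ → f ∈ PkX k XX → eval B f₀ = 0 := by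
    intro f f₀ hff hfm
    have h0 : eval B f = 0 := (mem_PkX.mp hfm).2 B hBX
    rw [hff, map_mul] at h0
    exact (mul_eq_zero.mp h0).resolve_left hBμ
  set w : Fin 3 → R2 := ![p₀, q₀, r₀] with hw
  have hwdeg : ∀ i, (w i).totalDegree ≤ 1 := by
    intro i; fin_cases i <;> simp [hw, hdp₀, hdq₀, hdr₀]
  have hwvan : ∀ i, eval B (w i) = 0 := by
    intro i; fin_cases i
    · simpa [hw] using hvanish (v 0) p₀ hpf (hvmem 0)
    · simpa [hw] using hvanish (v 1) q₀ hqf (hvmem 1)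
    · simpa [hw] using hvanish (v 2) r₀ hrf (hvmem 2)
  have hwind : LinearIndependent ℝ w := by
    rw [Fintype.linearIndependent_iff]
    intro g hg
    have hsum : ∑ i, g i • v i = 0 := by
      have hmul : μ * (∑ i, g i • w i) = ∑ i, g i • v i := by
        rw [Fin.sum_univ_three, Fin.sum_univ_three]
        simp only [hw, Matrix.cons_val_zero, Matrix.cons_val_one, Matrix.head_cons,
          Matrix.cons_val_two, Matrix.tail_cons]
        rw [hpf, hqf, hrf, mul_add, mul_add, mul_smul_comm, mul_smul_comm, mul_smul_comm]
      rw [← hmul, hg, mul_zero]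
    exact Fintype.linearIndependent_iff.mp hvind g hsum
  set w1 : Fin 3 → Vd 1 := fun i => ⟨w i, (mem_restrictTotalDegree _ _ _).mpr (hwdeg i)⟩
    with hw1
  have hw1mem : ∀ i, w1 i ∈ LinearMap.ker (ev1 B) := by
    intro i
    rw [LinearMap.mem_ker, ev1_apply]
    exact hwvan i
  have hw1ind : LinearIndependent ℝ w1 := by
    apply LinearIndependent.of_comp (Vd 1).subtype
    exact hwind
  have h3 := indep_le_finrank (LinearMap.ker (ev1 B)) hw1mem hw1ind
  have h4 := finrank_ker_ev1 B
  omega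

set_option maxHeartbeats 1000000 in
theorem fwd (hk2 : 2 ≤ k) (hkn : k + 1 ≤ n) (hind : NIndep n XX)
    (hcard : XX.card = dnk n (k - 1) + 1) (h2 : Module.finrank ℝ (PkX k XX) = 2) :
    ∃ μ : R2, μ ≠ 0 ∧ μ.totalDegree = k - 1 ∧
      {A ∈ (↑XX : Set Pt) | eval A μ = 0}.ncard = dnk n (k - 1) := by
  classical
  obtain ⟨v, hvmem, hvind⟩ := exists_tuple (show 2 ≤ Module.finrank ℝ (PkX k XX) by omega)
  have hpq : ∀ a b : ℝ, a • v 0 + b • v 1 = 0 → a = 0 ∧ b = 0 := by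
    intro a b hab
    have h := Fintype.linearIndependent_iff.mp hvind ![a, b] ?_
    · exact ⟨h 0, h 1⟩
    · rw [Fin.sum_univ_two]
      simpa using hab
  obtain ⟨μ, p₀, q₀, hpf, hqf, hμdeg, hdp₀, hdq₀, hdvd⟩ :=
    lemmaM hk2 hkn hind hcard (hvmem 0) (hvmem 1) hpq
  have hp0 : v 0 ≠ 0 := hvind.ne_zero 0
  have hμ0 : μ ≠ 0 := fun h => hp0 (by rw [hpf, h, zero_mul])
  -- at most one node off μ
  have huniq : ∀ B ∈ XX, ∀ B' ∈ XX, eval B μ ≠ 0 → eval B' μ ≠ 0 → B = B' := by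
    intro B hB B' hB' hBμ hB'μ
    by_contra hne
    have hvanish : ∀ (C₀ : Pt), C₀ ∈ XX → eval C₀ μ ≠ 0 →
        ∀ (f f₀ : R2), f = μ * f₀ → f ∈ PkX k XX → eval C₀ f₀ = 0 := by
      intro C₀ hC₀ hC₀μ f f₀ hff hfm
      have h0 : eval C₀ f = 0 := (mem_PkX.mp hfm).2 C₀ hC₀
      rw [hff, map_mul] at h0
      exact (mul_eq_zero.mp h0).resolve_left hC₀μ
    set w : Fin 2 → R2 := ![p₀, q₀] with hw
    have hwdeg : ∀ i, (w i).totalDegree ≤ 1 := by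
      intro i; fin_cases i <;> simp [hw, hdp₀, hdq₀]
    have hwvan : ∀ i, eval B (w i) = 0 ∧ eval B' (w i) = 0 := by
      intro i; fin_cases i
      · exact ⟨by simpa [hw] using hvanish B hB hBμ (v 0) p₀ hpf (hvmem 0),
          by simpa [hw] using hvanish B' hB' hB'μ (v 0) p₀ hpf (hvmem 0)⟩
      · exact ⟨by simpa [hw] using hvanish B hB hBμ (v 1) q₀ hqf (hvmem 1),
          by simpa [hw] using hvanish B' hB' hB'μ (v 1) q₀ hqf (hvmem 1)⟩
    have hwind : LinearIndependent ℝ w := by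
      rw [Fintype.linearIndependent_iff]
      intro g hg
      have hsum : ∑ i, g i • v i = 0 := by
        have hmul : μ * (∑ i, g i • w i) = ∑ i, g i • v i := by
          rw [Fin.sum_univ_two, Fin.sum_univ_two]
          simp only [hw, Matrix.cons_val_zero, Matrix.cons_val_one, Matrix.head_cons]
          rw [hpf, hqf, mul_add, mul_smul_comm, mul_smul_comm]
        rw [← hmul, hg, mul_zero]
      exact Fintype.linearIndependent_iff.mp hvind g hsum
    set w1 : Fin 2 → Vd 1 := fun i => ⟨w i, (mem_restrictTotalDegree _ _ _).mpr (hwdeg i)⟩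
    have hw1mem : ∀ i, w1 i ∈ LinearMap.ker ((ev1 B).prod (ev1 B')) := by
      intro i
      rw [LinearMap.mem_ker, LinearMap.prod_apply]
      have := hwvan i
      simp [ev1_apply, this.1, this.2, Prod.ext_iff]
      exact this
    have hw1ind : LinearIndependent ℝ w1 := by
      apply LinearIndependent.of_comp (Vd 1).subtype
      exact hwind
    have hup := finrank_ker_ev2 hne
    have hdown := indep_le_finrank (LinearMap.ker ((ev1 B).prod (ev1 B'))) hw1mem hw1ind
    omega
  -- counting
  set F := XX.filter (fun A => eval A μ = 0) with hF
  have hoff := off_curve hk2 hkn hind hcard hμ0 (le_of_eq hμdeg)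
  rw [← hF] at hoff
  have hFsub : F ⊆ XX := Finset.filter_subset _ _
  have hsd : (XX \ F).card ≤ 1 := by
    rw [Finset.card_le_one]
    intro a ha b hb
    rw [Finset.mem_sdiff, hF, Finset.mem_filter] at ha hb
    have ha' : eval a μ ≠ 0 := fun h => ha.2 ⟨ha.1, h⟩
    have hb' : eval b μ ≠ 0 := fun h => hb.2 ⟨hb.1, h⟩
    exact huniq a ha.1 b hb.1 ha' hb'
  rw [Finset.card_sdiff_of_subset hFsub] at hsd
  have hFle : F.card ≤ XX.card := Finset.card_le_card hFsub
  have hFcard : F.card = dnk n (k - 1) := by omega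
  refine ⟨μ, hμ0, hμdeg, ?_⟩
  have hseteq : {A ∈ (↑XX : Set Pt) | eval A μ = 0} = (↑F : Set Pt) := by
    ext A; simp [hF]
  rw [hseteq, Set.ncard_coe_finset, hFcard]

set_option maxHeartbeats 1000000 in
theorem bwd (hk2 : 2 ≤ k) (hkn : k + 1 ≤ n) (hind : NIndep n XX)
    (hcard : XX.card = dnk n (k - 1) + 1) {μ : R2} (hμ0 : μ ≠ 0)
    (hμdeg : μ.totalDegree = k - 1)
    (hcount : {A ∈ (↑XX : Set Pt) | eval A μ = 0}.ncard = dnk n (k - 1)) :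
    2 ≤ Module.finrank ℝ (PkX k XX) := by
  classical
  set F := XX.filter (fun A => eval A μ = 0) with hF
  have hFsub : F ⊆ XX := Finset.filter_subset _ _
  have hFcard : F.card = dnk n (k - 1) := by
    have hsetoeq : {A ∈ (↑XX : Set Pt) | eval A μ = 0} = (↑F : Set Pt) := by
      ext A; simp [hF]
    rw [hsetoeq, Set.ncard_coe_finset] at hcount
    exact hcount
  have hsd : (XX \ F).card = 1 := by
    rw [Finset.card_sdiff_of_subset hFsub, hFcard, hcard]
    omega
  obtain ⟨A₀, hA₀⟩ := Finset.card_eq_one.mp hsd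
  have hA₀mem : A₀ ∈ XX \ F := hA₀ ▸ Finset.mem_singleton_self A₀
  rw [Finset.mem_sdiff] at hA₀mem
  have hA₀X : A₀ ∈ XX := hA₀mem.1
  have hA₀μ : eval A₀ μ ≠ 0 := by
    intro h
    exact hA₀mem.2 (by rw [hF]; exact Finset.mem_filter.mpr ⟨hA₀X, h⟩)
  have hother : ∀ B ∈ XX, B ≠ A₀ → eval B μ = 0 := by
    intro B hB hBA
    by_contra h
    have : B ∈ XX \ F := Finset.mem_sdiff.mpr ⟨hB, fun hBF => h (Finset.mem_filter.mp hBF).2⟩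
    rw [hA₀] at this
    exact hBA (Finset.mem_singleton.mp this)
  -- the two independent elements
  set ℓ : Fin 2 → R2 := fun i => X i - C (A₀ i) with hℓ
  have hℓdeg : ∀ i, (ℓ i).totalDegree ≤ 1 := by
    intro i
    show (X i - C (A₀ i) : R2).totalDegree ≤ 1
    rw [sub_eq_add_neg]
    have h1 := totalDegree_add (X i : R2) (-(C (A₀ i)))
    have h2 : (-(C (A₀ i)) : R2).totalDegree = 0 := by
      rw [totalDegree_neg, totalDegree_C]
    have h3 : (X i : R2).totalDegree = 1 := totalDegree_X i
    omega
  set u : Fin 2 → R2 := fun i => μ * ℓ i with hu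
  have humem : ∀ i, u i ∈ PkX k XX := by
    intro i
    rw [mem_PkX]
    constructor
    · show (μ * ℓ i).totalDegree ≤ k
      have h1 := totalDegree_mul μ (ℓ i)
      have := hℓdeg i
      omega
    · intro A hA
      show eval A (μ * ℓ i) = 0
      rw [map_mul]
      by_cases hAA₀ : A = A₀
      · have hz : eval A (ℓ i) = 0 := by
          show eval A (X i - C (A₀ i)) = 0
          rw [hAA₀]
          simp
        rw [hz, mul_zero]
      · rw [hother A hA hAA₀, zero_mul]
  have huind : LinearIndependent ℝ u := by
    rw [Fintype.linearIndependent_iff]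
    intro g hg
    rw [Fin.sum_univ_two] at hg
    set s := g 0 with hgs
    set t := g 1 with hgt
    have hμfac : μ * (s • ℓ 0 + t • ℓ 1) = 0 := by
      rw [mul_add, mul_smul_comm, mul_smul_comm]
      exact hg
    have hlin : s • ℓ 0 + t • ℓ 1 = 0 := by
      rcases mul_eq_zero.mp hμfac with h | h
      · exact absurd h hμ0
      · exact h
    have heval : ∀ (wpt : Pt), s * (wpt 0 - A₀ 0) + t * (wpt 1 - A₀ 1) = 0 := by
      intro wpt
      have e0 : eval wpt (ℓ 0) = wpt 0 - A₀ 0 := by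
        show eval wpt (X 0 - C (A₀ 0)) = _
        simp
      have e1 : eval wpt (ℓ 1) = wpt 1 - A₀ 1 := by
        show eval wpt (X 1 - C (A₀ 1)) = _
        simp
      have hthis := congrArg (eval wpt) hlin
      rw [map_add, smul_eq_C_mul, smul_eq_C_mul, map_mul, map_mul, eval_C, eval_C,
        e0, e1] at hthis
      simpa using hthis
    have h1 := heval ![A₀ 0 + 1, A₀ 1]
    have h2 := heval ![A₀ 0, A₀ 1 + 1]
    simp at h1 h2
    intro i
    fin_cases i
    · exact h1
    · exact h2
  have hfin := indep_le_finrank (PkX k XX) humem huind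
  simpa using hfin


/-- **Theorem 2.** If `X` is an `n`-independent set of `d(n,k-1)+1` nodes with `2 ≤ k ≤ n-1`,
then at most two linearly independent curves of degree `≤ k` pass through all the nodes of `X`;
there are exactly two such curves iff all the nodes of `X` but one lie in a maximal curve of
degree `k-1`. -/
theorem stmt13 (n k : ℕ) (hk2 : 2 ≤ k) (hkn : k + 1 ≤ n) (X : Finset Pt)
    (hind : NIndep n X) (hcard : X.card = dnk n (k - 1) + 1) :
    Module.finrank ℝ (PkX k X) ≤ 2 ∧
      (Module.finrank ℝ (PkX k X) = 2 ↔
        ∃ μ : MvPolynomial (Fin 2) ℝ, μ ≠ 0 ∧ μ.totalDegree = k - 1 ∧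
          {A ∈ (↑X : Set Pt) | eval A μ = 0}.ncard = dnk n (k - 1)) := by
  refine ⟨part1 hk2 hkn hind hcard, ?_, ?_⟩
  · intro h2
    exact fwd hk2 hkn hind hcard h2
  · rintro ⟨μ, hμ0, hμdeg, hcount⟩
    have h1 := bwd hk2 hkn hind hcard hμ0 hμdeg hcount
    have h2 := part1 hk2 hkn hind hcard
    omega

end Dim
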